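/- arXiv:2208.07083 — 8 statements merged into one kernel-verified Lean document; each statement's English description precedes it below -/
import Mathlib

section
/- Let F : I × I → I be reflexive and bisymmetric, and suppose F(u,v) = F(v,u) for some u, v ∈ I. Let (u,v,F)_∞ denote the smallest subset S of I containing u and v and closed under F (i.e., x, y ∈ S implies F(x,y) ∈ S). Then F(s,t) = F(t,s) for all s, t ∈ (u,v,F)_∞. -/
/-- The closure of `{u, v}` under the binary operation `F`, i.e. `(u,v,F)_∞`. -/
inductive GenClosure (F : ℝ → ℝ → ℝ) (u v : ℝ) : ℝ → Prop
  | base_u : GenClosure F u v u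
  | base_v : GenClosure F u v v
  | op {x y : ℝ} : GenClosure F u v x → GenClosure F u v y → GenClosure F u v (F x y)

/-- If F is reflexive and bisymmetric and F(u,v)=F(v,u), then F is
symmetric on the closure of {u,v} under F. -/
theorem stmt_3 (I : Set ℝ) (hI : I.OrdConnected) (F : ℝ → ℝ → ℝ)
    (hmap : ∀ x ∈ I, ∀ y ∈ I, F x y ∈ I)
    (hrefl : ∀ x ∈ I, F x x = x)
    (hbisym : ∀ x ∈ I, ∀ y ∈ I, ∀ u ∈ I, ∀ v ∈ I,
      F (F x y) (F u v) = F (F x u) (F y v))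
    (u v : ℝ) (hu : u ∈ I) (hv : v ∈ I) (huv : F u v = F v u) :
    ∀ s t : ℝ, GenClosure F u v s → GenClosure F u v t → F s t = F t s := by
  -- every element of the closure is in I
  have hmem : ∀ x : ℝ, GenClosure F u v x → x ∈ I := by
    intro x hx
    induction hx with
    | base_u => exact hu
    | base_v => exact hv
    | op hx hy ihx ihy => exact hmap _ ihx _ ihy
  -- key step: if a commutes with x and y then a commutes with F x y
  have key : ∀ a ∈ I, ∀ x ∈ I, ∀ y ∈ I,
      F a x = F x a → F a y = F y a → F a (F x y) = F (F x y) a := by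
    intro a ha x hx y hy h1 h2
    calc F a (F x y) = F (F a a) (F x y) := by rw [hrefl a ha]
      _ = F (F a x) (F a y) := hbisym a ha a ha x hx y hy
      _ = F (F x a) (F y a) := by rw [h1, h2]
      _ = F (F x y) (F a a) := (hbisym x hx y hy a ha a ha).symm
      _ = F (F x y) a := by rw [hrefl a ha]
  intro s t hs ht
  induction hs with
  | base_u =>
    induction ht with
    | base_u => rfl
    | base_v => exact huv
    | op hx hy ihx ihy =>
      exact key u hu _ (hmem _ hx) _ (hmem _ hy) ihx ihy
  | base_v =>
    induction ht with
    | base_u => exact huv.symm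
    | base_v => rfl
    | op hx hy ihx ihy =>
      exact key v hv _ (hmem _ hx) _ (hmem _ hy) ihx ihy
  | op hx hy ihx ihy =>
    exact (key t (hmem _ ht) _ (hmem _ hx) _ (hmem _ hy)
      ihx.symm ihy.symm).symm
end

section
/- Let F : I × I → I be bisymmetric and cancellative. Let I₁, I₂ ⊆ I be subsets on which F is symmetric (i.e., F(x,y) = F(y,x) whenever x, y both lie in I₁, or both lie in I₂). If I₁ ∩ I₂ ≠ ∅, then F is symmetric on I₁ ∪ I₂. -/
/-- For a bisymmetric cancellative map, if F is symmetric on I₁ and on I₂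
and I₁ ∩ I₂ ≠ ∅, then F is symmetric on I₁ ∪ I₂. -/
theorem stmt_4 (I : Set ℝ) (hI : I.OrdConnected) (F : ℝ → ℝ → ℝ)
    (hmap : ∀ x ∈ I, ∀ y ∈ I, F x y ∈ I)
    (hbisym : ∀ x ∈ I, ∀ y ∈ I, ∀ u ∈ I, ∀ v ∈ I,
      F (F x y) (F u v) = F (F x u) (F y v))
    (hcanc : ∀ x ∈ I, ∀ y ∈ I, ∀ a ∈ I,
      (F x a = F y a → x = y) ∧ (F a x = F a y → x = y))
    (I₁ I₂ : Set ℝ) (hI₁ : I₁ ⊆ I) (hI₂ : I₂ ⊆ I)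
    (hsym₁ : ∀ x ∈ I₁, ∀ y ∈ I₁, F x y = F y x)
    (hsym₂ : ∀ x ∈ I₂, ∀ y ∈ I₂, F x y = F y x)
    (hinter : (I₁ ∩ I₂).Nonempty) :
    ∀ x ∈ I₁ ∪ I₂, ∀ y ∈ I₁ ∪ I₂, F x y = F y x := by
  obtain ⟨a, ha₁, ha₂⟩ := hinter
  have haI : a ∈ I := hI₁ ha₁
  have key : ∀ x ∈ I₁, ∀ y ∈ I₂, F x y = F y x := by
    intro x hx y hy
    have hxI := hI₁ hx
    have hyI := hI₂ hy
    have e : F (F x y) (F a a) = F (F y x) (F a a) := by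
      calc F (F x y) (F a a) = F (F x a) (F y a) := hbisym x hxI y hyI a haI a haI
        _ = F (F a x) (F y a) := by rw [hsym₁ x hx a ha₁]
        _ = F (F a y) (F x a) := hbisym a haI x hxI y hyI a haI
        _ = F (F y a) (F x a) := by rw [hsym₂ a ha₂ y hy]
        _ = F (F y x) (F a a) := (hbisym y hyI x hxI a haI a haI).symm
    exact (hcanc (F x y) (hmap x hxI y hyI) (F y x) (hmap y hyI x hxI)
      (F a a) (hmap a haI a haI)).1 e
  rintro x (hx | hx) y (hy | hy)
  · exact hsym₁ x hx y hy
  · exact key x hx y hy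
  · exact (key y hy x hx).symm
  · exact hsym₂ x hx y hy
end

section
/- Let F : I × I → I be bisymmetric. Let I₁, I₂ ⊆ I be subsets on which F is symmetric. Then F is symmetric on the set F(I₁, I₂) := {F(x₁, x₂) : x₁ ∈ I₁, x₂ ∈ I₂}, i.e., F(z₁, z₂) = F(z₂, z₁) for all z₁, z₂ ∈ F(I₁, I₂). -/
/-- For a bisymmetric map, if F is symmetric on I₁ and on I₂,
then F is symmetric on F(I₁, I₂) = {F(x₁,x₂) : x₁ ∈ I₁, x₂ ∈ I₂}. -/
theorem stmt_5 (I : Set ℝ) (hI : I.OrdConnected) (F : ℝ → ℝ → ℝ)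
    (hmap : ∀ x ∈ I, ∀ y ∈ I, F x y ∈ I)
    (hbisym : ∀ x ∈ I, ∀ y ∈ I, ∀ u ∈ I, ∀ v ∈ I,
      F (F x y) (F u v) = F (F x u) (F y v))
    (I₁ I₂ : Set ℝ) (hI₁ : I₁ ⊆ I) (hI₂ : I₂ ⊆ I)
    (hsym₁ : ∀ x ∈ I₁, ∀ y ∈ I₁, F x y = F y x)
    (hsym₂ : ∀ x ∈ I₂, ∀ y ∈ I₂, F x y = F y x) :
    ∀ z₁ ∈ Set.image2 F I₁ I₂, ∀ z₂ ∈ Set.image2 F I₁ I₂, F z₁ z₂ = F z₂ z₁ := by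
  rintro z₁ ⟨a, ha, b, hb, rfl⟩ z₂ ⟨c, hc, d, hd, rfl⟩
  have haI := hI₁ ha; have hbI := hI₂ hb; have hcI := hI₁ hc; have hdI := hI₂ hd
  rw [hbisym a haI b hbI c hcI d hdI, hsym₁ a ha c hc, hsym₂ b hb d hd,
    ← hbisym c hcI d hdI a haI b hbI]
end

section
/- Let F : I × I → I be bisymmetric and cancellative. Define a relation ∼ on I by a ∼ b iff F(a,b) = F(b,a). Then ∼ is an equivalence relation on I. -/
/-- For a bisymmetric cancellative map, the relation a ∼ b ⟺ F(a,b)=F(b,a)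
is an equivalence relation on I. -/
theorem stmt_6 (I : Set ℝ) (hI : I.OrdConnected) (F : ℝ → ℝ → ℝ)
    (hmap : ∀ x ∈ I, ∀ y ∈ I, F x y ∈ I)
    (hbisym : ∀ x ∈ I, ∀ y ∈ I, ∀ u ∈ I, ∀ v ∈ I,
      F (F x y) (F u v) = F (F x u) (F y v))
    (hcanc : ∀ x ∈ I, ∀ y ∈ I, ∀ a ∈ I,
      (F x a = F y a → x = y) ∧ (F a x = F a y → x = y)) :
    (∀ a ∈ I, F a a = F a a) ∧
    (∀ a ∈ I, ∀ b ∈ I, F a b = F b a → F b a = F a b) ∧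
    (∀ a ∈ I, ∀ b ∈ I, ∀ c ∈ I, F a b = F b a → F b c = F c b → F a c = F c a) := by
  refine ⟨fun a _ => rfl, fun a _ b _ h => h.symm, ?_⟩
  intro a ha b hb c hc hab hbc
  have key : F (F a c) (F b b) = F (F c a) (F b b) := by
    calc F (F a c) (F b b) = F (F a b) (F c b) := hbisym a ha c hc b hb b hb
      _ = F (F b a) (F c b) := by rw [hab]
      _ = F (F b c) (F a b) := hbisym b hb a ha c hc b hb
      _ = F (F c b) (F a b) := by rw [hbc]
      _ = F (F c a) (F b b) := (hbisym c hc a ha b hb b hb).symm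
  exact (hcanc _ (hmap a ha c hc) _ (hmap c hc a ha) _ (hmap b hb b hb)).1 key
end

section
/- Let F : I × I → I be bisymmetric and cancellative, and let A, B be two distinct equivalence classes of the relation a ∼ b ⟺ F(a,b) = F(b,a). Then the sets F(A,C) and F(B,C) are disjoint for every equivalence class C. (Equivalently: if F(x₁,y₁) = F(x₂,y₂) with y₁ ∼ y₂, then x₁ ∼ x₂.) -/
/-- For a bisymmetric cancellative map, if A ≠ B are equivalence classes
of a ∼ b ⟺ F(a,b)=F(b,a), then F(A,C) and F(B,C) are disjoint for every class C.
Equivalently, F(x₁,y₁)=F(x₂,y₂) with y₁ ∼ y₂ implies x₁ ∼ x₂. -/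
theorem stmt_8 (I : Set ℝ) (hI : I.OrdConnected) (F : ℝ → ℝ → ℝ)
    (hmap : ∀ x ∈ I, ∀ y ∈ I, F x y ∈ I)
    (hbisym : ∀ x ∈ I, ∀ y ∈ I, ∀ u ∈ I, ∀ v ∈ I,
      F (F x y) (F u v) = F (F x u) (F y v))
    (hcanc : ∀ x ∈ I, ∀ y ∈ I, ∀ a ∈ I,
      (F x a = F y a → x = y) ∧ (F a x = F a y → x = y)) :
    (∀ A B C : Set ℝ,
      (∃ a₀ ∈ I, A = {x ∈ I | F a₀ x = F x a₀}) →
      (∃ b₀ ∈ I, B = {x ∈ I | F b₀ x = F x b₀}) →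
      (∃ c₀ ∈ I, C = {x ∈ I | F c₀ x = F x c₀}) →
      A ≠ B → Disjoint (Set.image2 F A C) (Set.image2 F B C)) ∧
    (∀ x₁ ∈ I, ∀ x₂ ∈ I, ∀ y₁ ∈ I, ∀ y₂ ∈ I,
      F x₁ y₁ = F x₂ y₂ → F y₁ y₂ = F y₂ y₁ → F x₁ x₂ = F x₂ x₁) := by
  -- transitivity of the commutation relation
  have htrans : ∀ a ∈ I, ∀ b ∈ I, ∀ c ∈ I,
      F a b = F b a → F b c = F c b → F a c = F c a := by
    intro a ha b hb c hc hab hbc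
    have h1 : F (F b a) (F b c) = F (F b b) (F a c) := hbisym b hb a ha b hb c hc
    have h2 : F (F b c) (F b a) = F (F b b) (F c a) := hbisym b hb c hc b hb a ha
    have h3 : F (F b a) (F c b) = F (F b c) (F a b) := hbisym b hb a ha c hc b hb
    have key : F (F b b) (F a c) = F (F b b) (F c a) := by
      rw [← h1, ← h2, hbc, h3, hab, hbc]
    exact (hcanc (F a c) (hmap a ha c hc) (F c a) (hmap c hc a ha)
      (F b b) (hmap b hb b hb)).2 key
  -- the key lemma (second part of the statement)
  have hkey : ∀ x₁ ∈ I, ∀ x₂ ∈ I, ∀ y₁ ∈ I, ∀ y₂ ∈ I,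
      F x₁ y₁ = F x₂ y₂ → F y₁ y₂ = F y₂ y₁ → F x₁ x₂ = F x₂ x₁ := by
    intro x₁ hx₁ x₂ hx₂ y₁ hy₁ y₂ hy₂ heq hy
    have h1 : F (F x₁ x₂) (F y₁ y₂) = F (F x₁ y₁) (F x₂ y₂) :=
      hbisym x₁ hx₁ x₂ hx₂ y₁ hy₁ y₂ hy₂
    have h2 : F (F x₂ x₁) (F y₂ y₁) = F (F x₂ y₂) (F x₁ y₁) :=
      hbisym x₂ hx₂ x₁ hx₁ y₂ hy₂ y₁ hy₁
    have key : F (F x₁ x₂) (F y₁ y₂) = F (F x₂ x₁) (F y₁ y₂) := by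
      rw [h1, hy, h2, heq]
    exact (hcanc (F x₁ x₂) (hmap x₁ hx₁ x₂ hx₂) (F x₂ x₁) (hmap x₂ hx₂ x₁ hx₁)
      (F y₁ y₂) (hmap y₁ hy₁ y₂ hy₂)).1 key
  refine ⟨?_, hkey⟩
  rintro A B C ⟨a₀, ha₀, rfl⟩ ⟨b₀, hb₀, rfl⟩ ⟨c₀, hc₀, rfl⟩ hAB
  rw [Set.disjoint_left]
  rintro z ⟨a, ha, c, hc, rfl⟩ ⟨b, hb, c', hc', heq⟩
  obtain ⟨haI, ha0⟩ := ha
  obtain ⟨hbI, hb0⟩ := hb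
  obtain ⟨hcI, hc0⟩ := hc
  obtain ⟨hc'I, hc'0⟩ := hc'
  -- c ∼ c'
  have hcc' : F c c' = F c' c :=
    htrans c hcI c₀ hc₀ c' hc'I hc0.symm hc'0
  -- a ∼ b  (note heq : F b c' = F a c)
  have hab : F a b = F b a :=
    (hkey b hbI a haI c' hc'I c hcI heq hcc'.symm).symm
  -- hence a₀ ∼ b₀, so the classes coincide, contradiction
  have hab0 : F a₀ b₀ = F b₀ a₀ := by
    have h1 : F a₀ a = F a a₀ := ha0
    have h2 : F a b₀ = F b₀ a :=
      htrans a haI b hbI b₀ hb₀ hab hb0.symm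
    exact htrans a₀ ha₀ a haI b₀ hb₀ h1 h2
  apply hAB
  ext x
  simp only [Set.mem_setOf_eq]
  constructor
  · rintro ⟨hxI, hx⟩
    exact ⟨hxI, htrans b₀ hb₀ a₀ ha₀ x hxI hab0.symm hx⟩
  · rintro ⟨hxI, hx⟩
    exact ⟨hxI, htrans a₀ ha₀ b₀ hb₀ x hxI hab0 hx⟩
end

section
/- If a compact connected Hausdorff space X is covered by countably many pairwise disjoint closed subsets X₁, X₂, X₃, …, then at most one of the sets Xᵢ is non-empty. -/
open Set

/-- In a compact T2 space, if the connected component of `x` is contained in an open set `U`,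
then there is a clopen set between them. -/
lemma exists_clopen_of_connectedComponent_subset {Y : Type*} [TopologicalSpace Y]
    [CompactSpace Y] [T2Space Y] {x : Y} {U : Set Y} (hU : IsOpen U)
    (h : connectedComponent x ⊆ U) :
    ∃ V : Set Y, IsClopen V ∧ x ∈ V ∧ V ⊆ U := by
  have H1 := hU.isClosed_compl.isCompact.inter_iInter_nonempty
    (fun s : { s : Set Y // IsClopen s ∧ x ∈ s } => (s : Set Y)) fun s => s.2.1.1
  rw [← not_disjoint_iff_nonempty_inter, imp_not_comm, not_forall] at H1
  obtain ⟨si, H2⟩ := H1 (by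
    rw [← connectedComponent_eq_iInter_isClopen]
    exact disjoint_compl_left_iff_subset.2 h)
  refine ⟨⋂ s ∈ si, (s : Set Y), isClopen_biInter_finset fun s _ => s.2.1,
    mem_iInter₂.2 fun s _ => s.2.2, ?_⟩
  rw [not_nonempty_iff_eq_empty, ← disjoint_iff_inter_eq_empty] at H2
  exact disjoint_compl_left_iff_subset.1 H2

/-- Boundary bumping: in a compact connected T2 space, the connected component of a point in a
proper closed subset meets the frontier of that subset. -/
lemma bump {Y : Type*} [TopologicalSpace Y] [CompactSpace Y] [ConnectedSpace Y] [T2Space Y]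
    {F : Set Y} (hF : IsClosed F) (hFne : F ≠ univ) {x : Y} (hx : x ∈ F) :
    (connectedComponentIn F x ∩ frontier F).Nonempty := by
  by_contra hemp
  rw [not_nonempty_iff_eq_empty, ← disjoint_iff_inter_eq_empty] at hemp
  -- component is inside the interior of F
  have hsubint : connectedComponentIn F x ⊆ interior F := by
    intro y hy
    have hyF : y ∈ F := connectedComponentIn_subset F x hy
    have : y ∉ frontier F := fun h => (hemp.ne_of_mem hy h) rfl
    rw [hF.frontier_eq] at this
    exact by_contra fun h => this ⟨hyF, h⟩
  haveI : CompactSpace F := isCompact_iff_compactSpace.1 hF.isCompact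
  set p : F := ⟨x, hx⟩
  have himg : connectedComponentIn F x = (↑) '' connectedComponent p :=
    connectedComponentIn_eq_image hx
  have hcc : connectedComponent p ⊆ (↑) ⁻¹' interior F := by
    intro y hy
    exact hsubint (himg ▸ mem_image_of_mem _ hy)
  obtain ⟨V, hVclopen, hpV, hVsub⟩ :=
    exists_clopen_of_connectedComponent_subset (isOpen_interior.preimage continuous_subtype_val) hcc
  -- W := image of V in Y is clopen in Y
  set W : Set Y := (↑) '' V
  have hWF : W ⊆ F := by rintro _ ⟨v, _, rfl⟩; exact v.2
  have hWint : W ⊆ interior F := by rintro _ ⟨v, hv, rfl⟩; exact hVsub hv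
  have hWclosed : IsClosed W :=
    hF.isClosedEmbedding_subtypeVal.isClosedMap V hVclopen.isClosed
  have hWopen : IsOpen W := by
    obtain ⟨O, hO, rfl⟩ := isOpen_induced_iff.1 hVclopen.isOpen
    have : W = O ∩ interior F := by
      apply Subset.antisymm
      · rintro _ ⟨v, hv, rfl⟩
        exact ⟨hv, hWint ⟨v, hv, rfl⟩⟩
      · rintro y ⟨hyO, hyint⟩
        exact ⟨⟨y, interior_subset hyint⟩, hyO, rfl⟩
    rw [this]
    exact hO.inter isOpen_interior
  have := (isClopen_iff.1 ⟨hWclosed, hWopen⟩)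
  rcases this with h | h
  · exact absurd h (Nonempty.ne_empty ⟨x, mem_image_of_mem _ hpV⟩)
  · exact hFne (univ_subset_iff.1 (h ▸ hWF))
open Set

section
variable {X : Type*} [TopologicalSpace X] [T2Space X]

/-- Shrinking lemma: given a subcontinuum `K` meeting at least two pieces of the partition,
we can find a subcontinuum of `K` missing `A i` and still meeting at least two pieces. -/
lemma sierpinski_shrink (A : ℕ → Set X)
    (hclosed : ∀ i, IsClosed (A i)) (hdisj : ∀ i j, i ≠ j → Disjoint (A i) (A j))
    (hcover : (⋃ i, A i) = Set.univ) {K : Set X} (hKcl : IsClosed K) (hKcp : IsCompact K)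
    (hKco : IsConnected K)
    (hK2 : ∃ j₁ j₂, j₁ ≠ j₂ ∧ (K ∩ A j₁).Nonempty ∧ (K ∩ A j₂).Nonempty) (i : ℕ) :
    ∃ K', K' ⊆ K ∧ IsClosed K' ∧ IsCompact K' ∧ IsConnected K' ∧ K' ∩ A i = ∅ ∧
      ∃ j₁ j₂, j₁ ≠ j₂ ∧ (K' ∩ A j₁).Nonempty ∧ (K' ∩ A j₂).Nonempty := by
  by_cases hi : K ∩ A i = ∅
  · exact ⟨K, Subset.rfl, hKcl, hKcp, hKco, hi, hK2⟩
  obtain ⟨a, haK, hai⟩ := nonempty_iff_ne_empty.2 hi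
  -- choose an index j ≠ i with K ∩ A j nonempty
  obtain ⟨j₁, j₂, hj12, hj1, hj2⟩ := hK2
  obtain ⟨j, hji, hjne⟩ : ∃ j, j ≠ i ∧ (K ∩ A j).Nonempty := by
    rcases eq_or_ne j₁ i with rfl | h
    · exact ⟨j₂, fun h => hj12 h.symm, hj2⟩
    · exact ⟨j₁, h, hj1⟩
  -- work inside the subtype T = K
  haveI : CompactSpace K := isCompact_iff_compactSpace.1 hKcp
  haveI : ConnectedSpace K := Subtype.connectedSpace hKco
  set B : ℕ → Set K := fun k => Subtype.val ⁻¹' A k with hB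
  have hBcover : (⋃ k, B k) = univ := by
    rw [← preimage_iUnion, hcover, preimage_univ]
  have hBi : (B i).Nonempty := ⟨⟨a, haK⟩, hai⟩
  obtain ⟨x0, hx0K, hx0j⟩ := hjne
  set x : K := ⟨x0, hx0K⟩
  have hxj : x ∈ B j := hx0j
  -- separate B i and B j by open sets
  have hBicl : IsClosed (B i) := (hclosed i).preimage continuous_subtype_val
  have hBjcl : IsClosed (B j) := (hclosed j).preimage continuous_subtype_val
  obtain ⟨U, V, hUo, hVo, hiU, hjV, hUV⟩ :=
    normal_separation hBicl hBjcl
      (Disjoint.preimage _ (hdisj i j (fun h => hji h.symm)))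
  have hclUj : Disjoint (closure U) (B j) := by
    have : closure U ⊆ Vᶜ := closure_minimal (disjoint_left.1 hUV) hVo.isClosed_compl
    exact Disjoint.mono_left this (disjoint_left.2 fun y hy hyj => hy (hjV hyj))
  -- D = complement of U; take the component of x in D
  set D : Set K := Uᶜ
  have hxD : x ∈ D := fun hxU => hclUj.ne_of_mem (subset_closure hxU) hxj rfl
  have hDcl : IsClosed D := hUo.isClosed_compl
  have hDne : D ≠ univ := by
    intro h
    obtain ⟨b, hb⟩ := hBi
    exact (h ▸ (mem_univ b : b ∈ (univ : Set K)) : b ∈ D) (hiU hb)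
  set C : Set K := connectedComponentIn D x with hC
  have hxC : x ∈ C := mem_connectedComponentIn hxD
  have hCD : C ⊆ D := connectedComponentIn_subset D x
  have hCpre : IsPreconnected C := isPreconnected_connectedComponentIn
  have hCcl : IsClosed C := by
    have h1 : closure C ⊆ C := by
      apply IsPreconnected.subset_connectedComponentIn hCpre.closure
        (subset_closure hxC)
      exact closure_minimal hCD hDcl
    exact isClosed_of_closure_subset h1
  obtain ⟨y, hyC, hyfr⟩ := bump hDcl hDne hxD
  have hyclU : y ∈ closure U := by
    rw [show D = Uᶜ from rfl, frontier_compl] at hyfr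
    exact frontier_subset_closure hyfr
  obtain ⟨k, hyk⟩ : ∃ k, y ∈ B k := by
    have : y ∈ ⋃ k, B k := hBcover ▸ mem_univ y
    exact mem_iUnion.1 this
  have hkj : k ≠ j := fun h => hclUj.ne_of_mem hyclU (h ▸ hyk) rfl
  -- push everything to X
  refine ⟨Subtype.val '' C, ?_, ?_, ?_, ?_, ?_, j, k, fun h => hkj h.symm, ?_, ?_⟩
  · rintro _ ⟨v, _, rfl⟩; exact v.2
  · exact ((hCcl.isCompact).image continuous_subtype_val).isClosed
  · exact hCcl.isCompact.image continuous_subtype_val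
  · exact (IsConnected.image ⟨⟨x, hxC⟩, hCpre⟩ _ continuous_subtype_val.continuousOn)
  · ext z
    simp only [mem_inter_iff, mem_empty_iff_false, iff_false, not_and]
    rintro ⟨v, hv, rfl⟩ hzi
    exact hCD hv (hiU hzi)
  · exact ⟨x0, ⟨x, hxC, rfl⟩, hx0j⟩
  · exact ⟨y.1, ⟨y, hyC, rfl⟩, hyk⟩

end

/-- Sierpinski: A continuum cannot be partitioned into countably many
pairwise disjoint closed sets, more than one of which is nonempty. -/
theorem stmt_9 (X : Type*) [TopologicalSpace X] [CompactSpace X] [ConnectedSpace X]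
    [T2Space X] (A : ℕ → Set X)
    (hclosed : ∀ i, IsClosed (A i))
    (hdisj : ∀ i j, i ≠ j → Disjoint (A i) (A j))
    (hcover : (⋃ i, A i) = Set.univ) :
    ∀ i j, (A i).Nonempty → (A j).Nonempty → i = j := by
  intro i j hi hj
  by_contra hij
  set P : Set X → Prop := fun K => IsClosed K ∧ IsCompact K ∧ IsConnected K ∧
    ∃ j₁ j₂, j₁ ≠ j₂ ∧ (K ∩ A j₁).Nonempty ∧ (K ∩ A j₂).Nonempty with hP
  have hPuniv : P univ :=
    ⟨isClosed_univ, isCompact_univ, isConnected_univ,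
      i, j, hij, by simpa using hi, by simpa using hj⟩
  have step : ∀ (K : {K : Set X // P K}) (n : ℕ),
      ∃ K' : {K : Set X // P K}, K'.1 ⊆ K.1 ∧ K'.1 ∩ A n = ∅ := by
    rintro ⟨K, hKcl, hKcp, hKco, hK2⟩ n
    obtain ⟨K', hsub, h1, h2, h3, h4, h5⟩ :=
      sierpinski_shrink A hclosed hdisj hcover hKcl hKcp hKco hK2 n
    exact ⟨⟨K', h1, h2, h3, h5⟩, hsub, h4⟩
  -- build the decreasing sequence
  let g : ℕ → {K : Set X // P K} := fun n =>
    Nat.rec ⟨univ, hPuniv⟩ (fun n Kn => (step Kn n).choose) n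
  have hgsucc : ∀ n, g (n + 1) = (step (g n) n).choose := fun n => rfl
  have hgsub : ∀ n, (g (n + 1)).1 ⊆ (g n).1 := fun n => by
    rw [hgsucc]; exact (step (g n) n).choose_spec.1
  have hgdisj : ∀ n, (g (n + 1)).1 ∩ A n = ∅ := fun n => by
    rw [hgsucc]; exact (step (g n) n).choose_spec.2
  have hgne : ∀ n, (g n).1.Nonempty := fun n => by
    obtain ⟨_, _, _, _, _, _, h, _⟩ := (g n).2
    exact ⟨_, h.choose_spec.1⟩
  have hinter : (⋂ n, (g n).1).Nonempty :=
    IsCompact.nonempty_iInter_of_sequence_nonempty_isCompact_isClosed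
      (fun n => (g n).1) hgsub hgne (g 0).2.2.1 (fun n => (g n).2.1)
  obtain ⟨z, hz⟩ := hinter
  obtain ⟨m, hzm⟩ : ∃ m, z ∈ A m := mem_iUnion.1 (hcover ▸ mem_univ z)
  have : z ∈ (g (m + 1)).1 ∩ A m := ⟨mem_iInter.1 hz (m + 1), hzm⟩
  rw [hgdisj m] at this
  exact this
end

section
/- Define F : [0,1]² → [0,1] by F(x,y) = y if both x, y ∈ [1/2, 1], and F(x,y) = min{x,y} otherwise. Then F is reflexive, bisymmetric, partially increasing (but not partially strictly increasing), and there exist x ≠ y with F(x,y) = F(y,x) as well as x' ≠ y' with F(x',y') ≠ F(y',x'). -/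
set_option maxHeartbeats 2000000


/-- A concrete map on [0,1]² which is reflexive, bisymmetric, partially
increasing but not partially strictly increasing, and neither symmetric nor nowhere
symmetric. -/
theorem stmt_14 (F : ℝ → ℝ → ℝ)
    (hF : ∀ x ∈ Set.Icc (0:ℝ) 1, ∀ y ∈ Set.Icc (0:ℝ) 1,
      F x y = if 1/2 ≤ x ∧ 1/2 ≤ y then y else min x y) :
    (∀ x ∈ Set.Icc (0:ℝ) 1, F x x = x) ∧
    (∀ x ∈ Set.Icc (0:ℝ) 1, ∀ y ∈ Set.Icc (0:ℝ) 1, ∀ u ∈ Set.Icc (0:ℝ) 1,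
      ∀ v ∈ Set.Icc (0:ℝ) 1, F (F x y) (F u v) = F (F x u) (F y v)) ∧
    (∀ y₀ ∈ Set.Icc (0:ℝ) 1, MonotoneOn (fun x => F x y₀) (Set.Icc 0 1)) ∧
    (∀ x₀ ∈ Set.Icc (0:ℝ) 1, MonotoneOn (fun y => F x₀ y) (Set.Icc 0 1)) ∧
    ¬ ((∀ y₀ ∈ Set.Icc (0:ℝ) 1, StrictMonoOn (fun x => F x y₀) (Set.Icc 0 1)) ∧
       (∀ x₀ ∈ Set.Icc (0:ℝ) 1, StrictMonoOn (fun y => F x₀ y) (Set.Icc 0 1))) ∧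
    (∃ x ∈ Set.Icc (0:ℝ) 1, ∃ y ∈ Set.Icc (0:ℝ) 1, x ≠ y ∧ F x y = F y x) ∧
    (∃ x ∈ Set.Icc (0:ℝ) 1, ∃ y ∈ Set.Icc (0:ℝ) 1, x ≠ y ∧ F x y ≠ F y x) := by
  have mem : ∀ x ∈ Set.Icc (0:ℝ) 1, ∀ y ∈ Set.Icc (0:ℝ) 1, F x y ∈ Set.Icc (0:ℝ) 1 := by
    intro x hx y hy
    rw [hF x hx y hy]
    obtain ⟨hx0, hx1⟩ := hx; obtain ⟨hy0, hy1⟩ := hy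
    constructor <;> simp only [min_def] <;> split_ifs <;> simp_all
  refine ⟨?_, ?_, ?_, ?_, ?_, ?_, ?_⟩
  · intro x hx
    rw [hF x hx x hx]
    split_ifs <;> simp
  · intro x hx y hy u hu v hv
    rw [hF _ (mem x hx y hy) _ (mem u hu v hv), hF _ (mem x hx u hu) _ (mem y hy v hv),
      hF x hx y hy, hF x hx u hu, hF y hy v hv, hF u hu v hv]
    simp only [← le_min_iff, min_def]
    split_ifs <;> linarith
  · intro y₀ hy₀ a ha b hb hab
    simp only
    rw [hF a ha y₀ hy₀, hF b hb y₀ hy₀]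
    simp only [← le_min_iff, min_def]
    split_ifs <;> linarith
  · intro x₀ hx₀ a ha b hb hab
    simp only
    rw [hF x₀ hx₀ a ha, hF x₀ hx₀ b hb]
    simp only [← le_min_iff, min_def]
    split_ifs <;> linarith
  · rintro ⟨h1, -⟩
    have := h1 1 ⟨by norm_num, le_refl 1⟩ (show (1/2:ℝ) ∈ Set.Icc (0:ℝ) 1 by norm_num)
      (Set.mem_Icc.mpr ⟨by norm_num, le_refl 1⟩) (by norm_num)
    simp only [hF (1/2 : ℝ) (by norm_num) 1 (by norm_num),
      hF (1 : ℝ) (by norm_num) 1 (by norm_num)] at this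
    norm_num at this
  · exact ⟨0, by norm_num, 1, by norm_num, by norm_num, by
      rw [hF 0 (by norm_num) 1 (by norm_num), hF 1 (by norm_num) 0 (by norm_num)]
      norm_num⟩
  · exact ⟨1/2, by norm_num, 1, by norm_num, by norm_num, by
      rw [hF (1/2) (by norm_num) 1 (by norm_num), hF 1 (by norm_num) (1/2) (by norm_num)]
      norm_num⟩
end

section
/- Suppose F : I × I → I is such that for every compact proper subinterval [u,v] ⊆ I there is a continuous strictly increasing bijection f_{uv} : [0,1] → [u,v] with F(x,y) = f_{uv}((f_{uv}⁻¹(x)+f_{uv}⁻¹(y))/2) for all x,y ∈ [u,v]. Then F is continuous on I × I and is a quasi-arithmetic mean on I: there is a continuous strictly monotonic bijection f from an interval J onto I with F(x,y) = f((f⁻¹(x)+f⁻¹(y))/2) for all x,y ∈ I. -/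
/-!
Write `g` for the inverse of a generating function, so that `g (F x y) = (g x + g y) / 2`.
On a compact interval such a `g` is unique up to a change `α * g + β` with `α > 0`: the difference
of two of them that agree at the endpoints obeys a maximum principle for `F`-means, hence vanishes.
Normalizing all local generators by `g a = 0`, `g b = 1` at two fixed points `a < b` of `I` makes
them agree on overlaps, so they glue to one strictly increasing `G` on `I` whose image is an
interval. Then `G` and its inverse are continuous and `F x y = G⁻¹ ((G x + G y) / 2)`.
-/

open Set

/-- `g` is the inverse `f⁻¹` of a generating function of `F` on `S`; phrasing the mean as
`g (F x y) = (g x + g y) / 2` avoids mentioning `f` at all. -/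
structure IsQuasiArithmeticGenerator (F : ℝ → ℝ → ℝ) (S : Set ℝ) (g : ℝ → ℝ) : Prop where
  strictMonoOn : StrictMonoOn g S
  ordConnected_image : (g '' S).OrdConnected
  mapsTo : ∀ x ∈ S, ∀ y ∈ S, F x y ∈ S
  map_mean : ∀ x ∈ S, ∀ y ∈ S, g (F x y) = (g x + g y) / 2

theorem StrictMonoOn.continuousOn_of_ordConnected_image {f : ℝ → ℝ} {s : Set ℝ}
    [s.OrdConnected] (hf : StrictMonoOn f s) (hs : (f '' s).OrdConnected) :
    ContinuousOn f s := by
  have : OrderTopology s := orderTopology_of_ordConnected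
  rw [continuousOn_iff_continuous_domRestrict]
  exact (hf.domRestrict.isEmbedding_of_ordConnected (by rwa [range_domRestrict])).continuous

theorem StrictMonoOn.mem_Icc_of_map_mem_Icc {f : ℝ → ℝ} {s : Set ℝ} (hf : StrictMonoOn f s)
    {x y z : ℝ} (hx : x ∈ s) (hy : y ∈ s) (hz : z ∈ s) (h : f z ∈ Icc (f x) (f y)) :
    z ∈ Icc x y :=
  ⟨(hf.le_iff_le hx hz).1 h.1, (hf.le_iff_le hz hy).1 h.2⟩

theorem StrictMonoOn.strictMonoOn_invFunOn_image {f : ℝ → ℝ} {s : Set ℝ}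
    (hf : StrictMonoOn f s) : StrictMonoOn (Function.invFunOn f s) (f '' s) := by
  rintro _ ⟨x, hx, rfl⟩ _ ⟨y, hy, rfl⟩ hxy
  rw [hf.injOn.leftInvOn_invFunOn hx, hf.injOn.leftInvOn_invFunOn hy]
  exact (hf.lt_iff_lt hx hy).1 hxy

theorem Set.OrdConnected.add_div_two_mem {s : Set ℝ} (hs : s.OrdConnected) {x y : ℝ}
    (hx : x ∈ s) (hy : y ∈ s) : (x + y) / 2 ∈ s := by
  rcases le_total x y with hxy | hxy
  · exact hs.out hx hy ⟨by linarith, by linarith⟩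
  · exact hs.out hy hx ⟨by linarith, by linarith⟩

namespace IsQuasiArithmeticGenerator

variable {F : ℝ → ℝ → ℝ} {S T : Set ℝ} {g g' : ℝ → ℝ} {u v : ℝ}

theorem continuousOn [S.OrdConnected] (hg : IsQuasiArithmeticGenerator F S g) :
    ContinuousOn g S :=
  hg.strictMonoOn.continuousOn_of_ordConnected_image hg.ordConnected_image

theorem congr (hg : IsQuasiArithmeticGenerator F S g) (h : EqOn g g' S) :
    IsQuasiArithmeticGenerator F S g' where
  strictMonoOn := hg.strictMonoOn.congr h
  ordConnected_image := h.image_eq ▸ hg.ordConnected_image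
  mapsTo := hg.mapsTo
  map_mean x hx y hy := by
    rw [← h hx, ← h hy, ← h (hg.mapsTo x hx y hy), hg.map_mean x hx y hy]

theorem mono [hT : T.OrdConnected] (hg : IsQuasiArithmeticGenerator F S g) (hTS : T ⊆ S) :
    IsQuasiArithmeticGenerator F T g where
  strictMonoOn := hg.strictMonoOn.mono hTS
  ordConnected_image := by
    refine ⟨?_⟩
    rintro _ ⟨x, hx, rfl⟩ _ ⟨y, hy, rfl⟩ r hr
    obtain ⟨z, hz, rfl⟩ := hg.ordConnected_image.out (mem_image_of_mem g (hTS hx))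
      (mem_image_of_mem g (hTS hy)) hr
    exact ⟨z, hT.out hx hy (hg.strictMonoOn.mem_Icc_of_map_mem_Icc (hTS hx) (hTS hy) hz hr), rfl⟩
  mapsTo x hx y hy := by
    have hFS := hg.mapsTo x (hTS hx) y (hTS hy)
    have hmean := hg.map_mean x (hTS hx) y (hTS hy)
    have hmono := hg.strictMonoOn.monotoneOn
    rcases le_total x y with hxy | hxy
    · have := hmono (hTS hx) (hTS hy) hxy
      exact hT.out hx hy <| hg.strictMonoOn.mem_Icc_of_map_mem_Icc (hTS hx) (hTS hy) hFS
        ⟨by linarith, by linarith⟩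
    · have := hmono (hTS hy) (hTS hx) hxy
      exact hT.out hy hx <| hg.strictMonoOn.mem_Icc_of_map_mem_Icc (hTS hy) (hTS hx) hFS
        ⟨by linarith, by linarith⟩
  map_mean x hx y hy := hg.map_mean x (hTS hx) y (hTS hy)

theorem affine (hg : IsQuasiArithmeticGenerator F S g) {α : ℝ} (hα : 0 < α) (β : ℝ) :
    IsQuasiArithmeticGenerator F S (fun x => α * g x + β) where
  strictMonoOn x hx y hy hxy := by
    have := hg.strictMonoOn hx hy hxy
    dsimp only
    gcongr
  ordConnected_image := by
    refine ⟨?_⟩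
    rintro _ ⟨x, hx, rfl⟩ _ ⟨y, hy, rfl⟩ r ⟨hxr, hry⟩
    obtain ⟨z, hz, hgz⟩ := hg.ordConnected_image.out (mem_image_of_mem g hx)
      (mem_image_of_mem g hy) (show (r - β) / α ∈ Icc (g x) (g y) from
        ⟨by rw [le_div_iff₀ hα]; linarith, by rw [div_le_iff₀ hα]; linarith⟩)
    exact ⟨z, hz, by simp only [hgz]; field_simp; ring⟩
  mapsTo := hg.mapsTo
  map_mean x hx y hy := by
    rw [hg.map_mean x hx y hy]
    ring

/-- Maximum principle: choose the leftmost maximum point `x₀` of `h`; the points `x₁ < x₀ < x₂`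
with `g x₁`, `g x₂` symmetric about `g x₀` have mean `x₀`, so `h x₀ ≤ (h x₁ + h x₂) / 2 < h x₀`. -/
theorem nonpos_of_map_mean_le (hg : IsQuasiArithmeticGenerator F (Icc u v) g) {h : ℝ → ℝ}
    (hc : ContinuousOn h (Icc u v)) (hu : h u ≤ 0) (hv : h v ≤ 0)
    (hmean : ∀ x ∈ Icc u v, ∀ y ∈ Icc u v, h (F x y) ≤ (h x + h y) / 2) :
    ∀ x ∈ Icc u v, h x ≤ 0 := by
  intro x hx
  obtain ⟨m, hm, hmax⟩ := isCompact_Icc.exists_isMaxOn ⟨x, hx⟩ hc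
  refine (hmax hx).trans (not_lt.1 fun hpos => ?_)
  have hK : IsCompact (Icc u v ∩ h ⁻¹' {h m}) := isCompact_Icc.of_isClosed_subset
    (hc.preimage_isClosed_of_isClosed isClosed_Icc isClosed_singleton) inter_subset_left
  obtain ⟨x₀, ⟨hx₀, hhx₀ : h x₀ = h m⟩, hleast⟩ := hK.exists_isLeast ⟨m, hm, rfl⟩
  have hux₀ : u < x₀ := hx₀.1.lt_of_ne (by rintro rfl; linarith)
  have hx₀v : x₀ < v := hx₀.2.lt_of_ne (by rintro rfl; linarith)
  have huv : u ≤ v := hx₀.1.trans hx₀.2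
  have hgu := hg.strictMonoOn (left_mem_Icc.2 huv) hx₀ hux₀
  have hgv := hg.strictMonoOn hx₀ (right_mem_Icc.2 huv) hx₀v
  set δ := min (g x₀ - g u) (g v - g x₀)
  have hδ : 0 < δ := lt_min (by linarith) (by linarith)
  have hsub : Icc (g u) (g v) ⊆ g '' Icc u v := hg.ordConnected_image.out
    (mem_image_of_mem g (left_mem_Icc.2 huv)) (mem_image_of_mem g (right_mem_Icc.2 huv))
  obtain ⟨x₁, hx₁, hgx₁⟩ := hsub (show g x₀ - δ ∈ Icc (g u) (g v) from
    ⟨by linarith [min_le_left (g x₀ - g u) (g v - g x₀)], by linarith⟩)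
  obtain ⟨x₂, hx₂, hgx₂⟩ := hsub (show g x₀ + δ ∈ Icc (g u) (g v) from
    ⟨by linarith, by linarith [min_le_right (g x₀ - g u) (g v - g x₀)]⟩)
  have hFx : F x₁ x₂ = x₀ := hg.strictMonoOn.injOn (hg.mapsTo x₁ hx₁ x₂ hx₂) hx₀ (by
    rw [hg.map_mean x₁ hx₁ x₂ hx₂, hgx₁, hgx₂]; ring)
  have hx₁x₀ : x₁ < x₀ := (hg.strictMonoOn.lt_iff_lt hx₁ hx₀).1 (by linarith)
  have hhx₁ : h x₁ < h m := lt_of_le_of_ne (hmax hx₁) fun he => (hleast ⟨hx₁, he⟩).not_gt hx₁x₀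
  have := hmean x₁ hx₁ x₂ hx₂
  rw [hFx, hhx₀] at this
  have hhx₂ : h x₂ ≤ h m := hmax hx₂
  linarith

theorem eqOn_Icc_of_eq_of_eq (hg : IsQuasiArithmeticGenerator F (Icc u v) g)
    (hg' : IsQuasiArithmeticGenerator F (Icc u v) g') (hu : g u = g' u) (hv : g v = g' v) :
    EqOn g g' (Icc u v) := by
  have hmean : ∀ x ∈ Icc u v, ∀ y ∈ Icc u v,
      g (F x y) - g' (F x y) = ((g x - g' x) + (g y - g' y)) / 2 := by
    intro x hx y hy
    rw [hg.map_mean x hx y hy, hg'.map_mean x hx y hy]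
    ring
  intro x hx
  have hle := hg.nonpos_of_map_mean_le (h := fun x => g x - g' x)
    (hg.continuousOn.sub hg'.continuousOn) (by linarith) (by linarith)
    (fun x hx y hy => (hmean x hx y hy).le) x hx
  have hge := hg.nonpos_of_map_mean_le (h := fun x => g' x - g x)
    (hg'.continuousOn.sub hg.continuousOn) (by linarith) (by linarith)
    (fun x hx y hy => by linarith [hmean x hx y hy]) x hx
  linarith

theorem exists_affine_eqOn_Icc (hg : IsQuasiArithmeticGenerator F (Icc u v) g)
    (hg' : IsQuasiArithmeticGenerator F (Icc u v) g') (huv : u < v) :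
    ∃ α β : ℝ, EqOn g' (fun x => α * g x + β) (Icc u v) := by
  have hu := left_mem_Icc.2 huv.le
  have hv := right_mem_Icc.2 huv.le
  have hguv := hg.strictMonoOn hu hv huv
  have hα : 0 < (g' v - g' u) / (g v - g u) :=
    div_pos (sub_pos.2 (hg'.strictMonoOn hu hv huv)) (sub_pos.2 hguv)
  refine ⟨_, _, ((hg.affine hα (g' u - (g' v - g' u) / (g v - g u) * g u)).eqOn_Icc_of_eq_of_eq
    hg' (by ring) ?_).symm⟩
  field_simp [(sub_pos.2 hguv).ne']
  ring

theorem eqOn_of_eq_of_eq [hS : S.OrdConnected] (hg : IsQuasiArithmeticGenerator F S g)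
    (hg' : IsQuasiArithmeticGenerator F S g') {a b : ℝ} (ha : a ∈ S) (hb : b ∈ S) (hab : a < b)
    (hga : g a = g' a) (hgb : g b = g' b) : EqOn g g' S := by
  intro x hx
  have hsub : Icc (min x a) (max x b) ⊆ S :=
    hS.out (min_rec' (· ∈ S) hx ha) (max_rec' (· ∈ S) hx hb)
  obtain ⟨α, β, hαβ⟩ := (hg.mono hsub).exists_affine_eqOn_Icc (hg'.mono hsub)
    ((min_le_right x a).trans_lt (hab.trans_le (le_max_right x b)))
  have ha' := hαβ ⟨min_le_right x a, hab.le.trans (le_max_right x b)⟩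
  have hb' := hαβ ⟨(min_le_right x a).trans hab.le, le_max_right x b⟩
  have hα : α = 1 := by
    have : (α - 1) * (g b - g a) = 0 := by simp only at ha' hb'; linarith
    rcases mul_eq_zero.1 this with h | h
    · linarith
    · exact absurd h (sub_pos.2 (hg.strictMonoOn ha hb hab)).ne'
  have := hαβ ⟨min_le_left x a, le_max_left x b⟩
  simp only [hα, one_mul] at ha' this
  linarith

theorem exists_eq_zero_eq_one (hg : IsQuasiArithmeticGenerator F S g) {a b : ℝ} (ha : a ∈ S)
    (hb : b ∈ S) (hab : a < b) :
    ∃ g', IsQuasiArithmeticGenerator F S g' ∧ g' a = 0 ∧ g' b = 1 := by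
  have hgab := sub_pos.2 (hg.strictMonoOn ha hb hab)
  refine ⟨_, hg.affine (inv_pos.2 hgab) (-(g b - g a)⁻¹ * g a), by ring, ?_⟩
  field_simp
  ring

theorem of_forall_exists_subset
    (h : ∀ x ∈ S, ∀ y ∈ S, ∃ T ⊆ S, x ∈ T ∧ y ∈ T ∧ IsQuasiArithmeticGenerator F T g) :
    IsQuasiArithmeticGenerator F S g where
  strictMonoOn x hx y hy hxy := by
    obtain ⟨T, -, hxT, hyT, hT⟩ := h x hx y hy
    exact hT.strictMonoOn hxT hyT hxy
  ordConnected_image := by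
    refine ⟨?_⟩
    rintro _ ⟨x, hx, rfl⟩ _ ⟨y, hy, rfl⟩
    obtain ⟨T, hTS, hxT, hyT, hT⟩ := h x hx y hy
    exact (hT.ordConnected_image.out (mem_image_of_mem g hxT) (mem_image_of_mem g hyT)).trans
      (image_mono hTS)
  mapsTo x hx y hy := by
    obtain ⟨T, hTS, hxT, hyT, hT⟩ := h x hx y hy
    exact hTS (hT.mapsTo x hxT y hyT)
  map_mean x hx y hy := by
    obtain ⟨T, -, hxT, hyT, hT⟩ := h x hx y hy
    exact hT.map_mean x hxT y hyT

theorem exists_of_forall_Icc [hS : S.OrdConnected] (hSn : ∃ a ∈ S, ∃ b ∈ S, a < b)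
    (h : ∀ u ∈ S, ∀ v ∈ S, u < v → ∃ g, IsQuasiArithmeticGenerator F (Icc u v) g) :
    ∃ g, IsQuasiArithmeticGenerator F S g := by
  obtain ⟨a, ha, b, hb, hab⟩ := hSn
  have hnorm : ∀ u ∈ S, ∀ v ∈ S, u ≤ a → b ≤ v →
      ∃ g, IsQuasiArithmeticGenerator F (Icc u v) g ∧ g a = 0 ∧ g b = 1 := by
    intro u hu v hv hua hbv
    obtain ⟨g, hg⟩ := h u hu v hv (hua.trans_lt (hab.trans_le hbv))
    exact hg.exists_eq_zero_eq_one ⟨hua, hab.le.trans hbv⟩ ⟨hua.trans hab.le, hbv⟩ hab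
  choose! gen hgen using fun x (hx : x ∈ S) => hnorm _ (min_rec' (· ∈ S) hx ha) _
    (max_rec' (· ∈ S) hx hb) (min_le_right x a) (le_max_right x b)
  refine ⟨fun x => gen x x, of_forall_exists_subset fun x hx y hy => ?_⟩
  have hu : min (min x y) a ∈ S := min_rec' (· ∈ S) (min_rec' (· ∈ S) hx hy) ha
  have hv : max (max x y) b ∈ S := max_rec' (· ∈ S) (max_rec' (· ∈ S) hx hy) hb
  obtain ⟨g, hg, hga, hgb⟩ := hnorm _ hu _ hv (min_le_right _ _) (le_max_right _ _)
  refine ⟨_, hS.out hu hv, ⟨(min_le_left _ _).trans (min_le_left _ _),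
    (le_max_left _ _).trans (le_max_left _ _)⟩, ⟨(min_le_left _ _).trans (min_le_right _ _),
    (le_max_right _ _).trans (le_max_left _ _)⟩, hg.congr fun z hz => ?_⟩
  obtain ⟨hgz, hgza, hgzb⟩ := hgen z (hS.out hu hv hz)
  exact (hg.mono (Icc_subset_Icc (le_min hz.1 (min_le_right _ _))
    (max_le hz.2 (le_max_right _ _)))).eqOn_of_eq_of_eq hgz
    ⟨min_le_right z a, hab.le.trans (le_max_right z b)⟩
    ⟨(min_le_right z a).trans hab.le, le_max_right z b⟩ hab (hga.trans hgza.symm)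
    (hgb.trans hgzb.symm) ⟨min_le_left z a, le_max_left z b⟩

theorem of_bijOn {J : Set ℝ} [hJ : J.OrdConnected] {f : ℝ → ℝ} (hf : StrictMonoOn f J)
    (hbij : BijOn f J S) (hgf : LeftInvOn g f J)
    (hF : ∀ x ∈ S, ∀ y ∈ S, F x y = f ((g x + g y) / 2)) :
    IsQuasiArithmeticGenerator F S g := by
  have hg : ∀ x ∈ S, g x ∈ J ∧ f (g x) = x := by
    intro x hx
    obtain ⟨t, ht, rfl⟩ := hbij.surjOn hx
    rw [hgf ht]
    exact ⟨ht, rfl⟩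
  have hmid : ∀ x ∈ S, ∀ y ∈ S, (g x + g y) / 2 ∈ J := fun x hx y hy =>
    hJ.add_div_two_mem (hg x hx).1 (hg y hy).1
  refine ⟨fun x hx y hy hxy => ?_, ?_, fun x hx y hy => ?_, fun x hx y hy => ?_⟩
  · rw [← (hg x hx).2, ← (hg y hy).2] at hxy
    exact (hf.lt_iff_lt (hg x hx).1 (hg y hy).1).1 hxy
  · convert hJ
    exact subset_antisymm (image_subset_iff.2 fun x hx => (hg x hx).1)
      fun t ht => ⟨f t, hbij.mapsTo ht, hgf ht⟩
  · exact hF x hx y hy ▸ hbij.mapsTo (hmid x hx y hy)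
  · rw [hF x hx y hy, hgf (hmid x hx y hy)]

theorem bijOn_invFunOn (hg : IsQuasiArithmeticGenerator F S g) :
    BijOn (Function.invFunOn g S) (g '' S) S :=
  hg.strictMonoOn.injOn.bijOn_image.symm hg.strictMonoOn.injOn.bijOn_image.invOn_invFunOn.symm

theorem continuousOn_invFunOn [S.OrdConnected] (hg : IsQuasiArithmeticGenerator F S g) :
    ContinuousOn (Function.invFunOn g S) (g '' S) := by
  have := hg.ordConnected_image
  exact hg.strictMonoOn.strictMonoOn_invFunOn_image.continuousOn_of_ordConnected_image
    (by rw [hg.bijOn_invFunOn.image_eq]; infer_instance)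

theorem eq_invFunOn (hg : IsQuasiArithmeticGenerator F S g) :
    ∀ x ∈ S, ∀ y ∈ S, F x y = Function.invFunOn g S ((g x + g y) / 2) := by
  intro x hx y hy
  rw [← hg.map_mean x hx y hy, hg.strictMonoOn.injOn.leftInvOn_invFunOn (hg.mapsTo x hx y hy)]

theorem continuousOn_uncurry [S.OrdConnected] (hg : IsQuasiArithmeticGenerator F S g) :
    ContinuousOn (fun p : ℝ × ℝ => F p.1 p.2) (S ×ˢ S) := by
  have hmean : ContinuousOn (fun p : ℝ × ℝ => (g p.1 + g p.2) / 2) (S ×ˢ S) :=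
    ((hg.continuousOn.comp continuousOn_fst fun _ hp => hp.1).add
      (hg.continuousOn.comp continuousOn_snd fun _ hp => hp.2)).div_const 2
  refine (hg.continuousOn_invFunOn.comp hmean fun p hp => ?_).congr
    fun p hp => hg.eq_invFunOn _ hp.1 _ hp.2
  exact hg.map_mean _ hp.1 _ hp.2 ▸ mem_image_of_mem g (hg.mapsTo _ hp.1 _ hp.2)

end IsQuasiArithmeticGenerator

theorem stmt_19_general (I : Set ℝ) (hI : I.OrdConnected)
    (hproper : ∃ x ∈ I, ∃ y ∈ I, x < y)
    (F : ℝ → ℝ → ℝ)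
    (hloc : ∀ u ∈ I, ∀ v ∈ I, u < v →
      ∃ f g : ℝ → ℝ,
        ContinuousOn f (Set.Icc 0 1) ∧
        StrictMonoOn f (Set.Icc 0 1) ∧
        Set.BijOn f (Set.Icc 0 1) (Set.Icc u v) ∧
        (∀ t ∈ Set.Icc (0:ℝ) 1, g (f t) = t) ∧
        (∀ x ∈ Set.Icc u v, ∀ y ∈ Set.Icc u v, F x y = f ((g x + g y) / 2))) :
    ContinuousOn (fun p : ℝ × ℝ => F p.1 p.2) (I ×ˢ I) ∧
    ∃ J : Set ℝ, J.OrdConnected ∧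
      ∃ f g : ℝ → ℝ,
        ContinuousOn f J ∧
        (StrictMonoOn f J ∨ StrictAntiOn f J) ∧
        Set.BijOn f J I ∧
        (∀ t ∈ J, g (f t) = t) ∧
        (∀ x ∈ I, ∀ y ∈ I, F x y = f ((g x + g y) / 2)) := by
  obtain ⟨G, hG⟩ := IsQuasiArithmeticGenerator.exists_of_forall_Icc hproper
    fun u hu v hv huv => by
      obtain ⟨f, g, -, hf, hbij, hgf, hF⟩ := hloc u hu v hv huv
      exact ⟨g, .of_bijOn hf hbij hgf hF⟩
  exact ⟨hG.continuousOn_uncurry, G '' I, hG.ordConnected_image, Function.invFunOn G I, G,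
    hG.continuousOn_invFunOn, .inl hG.strictMonoOn.strictMonoOn_invFunOn_image,
    hG.bijOn_invFunOn, hG.strictMonoOn.injOn.bijOn_image.invOn_invFunOn.2, hG.eq_invFunOn⟩

/-- If F is a quasi-arithmetic mean on every compact proper subinterval
of I, then F is continuous on I × I and a quasi-arithmetic mean on I. -/
theorem stmt_19 (I : Set ℝ) (hI : I.OrdConnected)
    (hproper : ∃ x ∈ I, ∃ y ∈ I, x < y)
    (F : ℝ → ℝ → ℝ)
    (hmap : ∀ x ∈ I, ∀ y ∈ I, F x y ∈ I)
    (hloc : ∀ u ∈ I, ∀ v ∈ I, u < v →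
      ∃ f g : ℝ → ℝ,
        ContinuousOn f (Set.Icc 0 1) ∧
        StrictMonoOn f (Set.Icc 0 1) ∧
        Set.BijOn f (Set.Icc 0 1) (Set.Icc u v) ∧
        (∀ t ∈ Set.Icc (0:ℝ) 1, g (f t) = t) ∧
        (∀ x ∈ Set.Icc u v, ∀ y ∈ Set.Icc u v, F x y = f ((g x + g y) / 2))) :
    ContinuousOn (fun p : ℝ × ℝ => F p.1 p.2) (I ×ˢ I) ∧
    ∃ J : Set ℝ, J.OrdConnected ∧
      ∃ f g : ℝ → ℝ,
        ContinuousOn f J ∧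
        (StrictMonoOn f J ∨ StrictAntiOn f J) ∧
        Set.BijOn f J I ∧
        (∀ t ∈ J, g (f t) = t) ∧
        (∀ x ∈ I, ∀ y ∈ I, F x y = f ((g x + g y) / 2)) :=
  stmt_19_general I hI hproper F hloc
end
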